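/- Let G ∈ ℂ⟦X⟧ be the exponential generating function G = ∑_{n≥0} ĉ_n^{(k)}(α,a) X^n/n! of the two-parameter Hurwitz-Lerch type poly-Cauchy numbers of the second kind. Then, for every k ∈ ℤ, the formal derivative of G satisfies (1 + X) · G′ = ∑_{n≥0} D̂_n^{(k)}(α,a) X^n/n!, where D̂_n^{(k)}(α,a) = (-1)^{n+1} ∑_{j=0}^{n} [n j] · (α(j+1) + a)^{-k}. -/

import Mathlib

open PowerSeries Finset

/-- Unsigned Stirling numbers of the first kind. -/
def stirling1 : ℕ → ℕ → ℕ
  | 0, 0 => 1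
  | 0, _ + 1 => 0
  | _ + 1, 0 => 0
  | n + 1, m + 1 => stirling1 n m + n * stirling1 n (m + 1)

/-- Stirling numbers of the second kind. -/
def stirling2 : ℕ → ℕ → ℕ
  | 0, 0 => 1
  | 0, _ + 1 => 0
  | _ + 1, 0 => 0
  | n + 1, m + 1 => stirling2 n m + (m + 1) * stirling2 n (m + 1)

/-- Two-parameter Hurwitz-Lerch type poly-Bernoulli numbers
    `B_n^{(k)}(α,a) = (-1)^n ∑_{m=0}^n (-1)^m m! {n m} (αm+a)^{-k}`. -/
noncomputable def polyBernoulli (k : ℤ) (α a : ℂ) (n : ℕ) : ℂ :=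
  (-1 : ℂ) ^ n * ∑ m ∈ Finset.range (n + 1),
    (-1 : ℂ) ^ m * (m.factorial : ℂ) * (stirling2 n m : ℂ) * (α * m + a) ^ (-k)

/-- Two-parameter Hurwitz-Lerch type poly-Cauchy numbers of the first kind
    `c_n^{(k)}(α,a) = (-1)^n ∑_{m=0}^n (-1)^m [n m] (αm+a)^{-k}`. -/
noncomputable def polyCauchy1 (k : ℤ) (α a : ℂ) (n : ℕ) : ℂ :=
  (-1 : ℂ) ^ n * ∑ m ∈ Finset.range (n + 1),
    (-1 : ℂ) ^ m * (stirling1 n m : ℂ) * (α * m + a) ^ (-k)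

/-- Two-parameter Hurwitz-Lerch type poly-Cauchy numbers of the second kind
    `ĉ_n^{(k)}(α,a) = (-1)^n ∑_{m=0}^n [n m] (αm+a)^{-k}`. -/
noncomputable def polyCauchy2 (k : ℤ) (α a : ℂ) (n : ℕ) : ℂ :=
  (-1 : ℂ) ^ n * ∑ m ∈ Finset.range (n + 1),
    (stirling1 n m : ℂ) * (α * m + a) ^ (-k)

/-- The formal power series `log(1+X) = ∑_{j≥1} (-1)^{j-1} X^j / j` in `ℂ⟦X⟧`. -/
noncomputable def formalLog : PowerSeries ℂ :=
  PowerSeries.mk fun j => if j = 0 then 0 else (-1 : ℂ) ^ (j - 1) / j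

/-!
The recurrence `[n+1, m+1] = [n, m] + n [n, m+1]` gives `ĉ_{n+1} + n ĉ_n = D̂_n`, while for any
exponential generating function `G = ∑ g_n X^n/n!` the coefficient of `X^n/n!` in `(1 + X) G′`
is `g_{n+1} + n g_n`.
-/

lemma stirling1_succ_zero (n : ℕ) : stirling1 (n + 1) 0 = 0 := rfl

lemma stirling1_eq_zero_of_lt : ∀ {n m : ℕ}, n < m → stirling1 n m = 0
  | 0, _ + 1, _ => rfl
  | n + 1, m + 1, h => by
      rw [stirling1, stirling1_eq_zero_of_lt (by omega : n < m),
        stirling1_eq_zero_of_lt (by omega : n < m + 1), mul_zero, add_zero]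

lemma mul_stirling1_zero (n : ℕ) : n * stirling1 n 0 = 0 := by
  cases n <;> rfl

lemma sum_range_stirling1_succ_mul {R : Type*} [CommSemiring R] (f : ℕ → R) (n : ℕ) :
    ∑ m ∈ range (n + 2), (stirling1 (n + 1) m : R) * f m =
      ∑ m ∈ range (n + 1), (stirling1 n m : R) * f (m + 1) +
        n * ∑ m ∈ range (n + 1), (stirling1 n m : R) * f m := by
  -- the boundary terms `[n, n+1]` and `n [n, 0]` vanish
  have hshift : n * ∑ m ∈ range (n + 1), (stirling1 n (m + 1) : R) * f (m + 1) =
      n * ∑ m ∈ range (n + 1), (stirling1 n m : R) * f m := by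
    rw [sum_range_succ, sum_range_succ' (fun m => (stirling1 n m : R) * f m),
      stirling1_eq_zero_of_lt n.lt_succ_self, mul_add, mul_add,
      ← mul_assoc (n : R) (stirling1 n 0 : R), ← Nat.cast_mul, mul_stirling1_zero]
    simp
  rw [sum_range_succ', stirling1_succ_zero, ← hshift, mul_sum, ← sum_add_distrib]
  simp only [stirling1]
  push_cast
  simp only [add_mul, mul_assoc, zero_mul, add_zero]

lemma polyCauchy2_succ_add_mul (k : ℤ) (α a : ℂ) (n : ℕ) :
    polyCauchy2 k α a (n + 1) + n * polyCauchy2 k α a n =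
      (-1 : ℂ) ^ (n + 1) * ∑ j ∈ range (n + 1),
        (stirling1 n j : ℂ) * (α * (j + 1) + a) ^ (-k) := by
  unfold polyCauchy2
  rw [sum_range_stirling1_succ_mul]
  push_cast
  ring

section ExponentialGeneratingFunction

variable {R : Type*} [Field R] [CharZero R]

lemma coeff_derivative_mk_div_factorial (g : ℕ → R) (n : ℕ) :
    coeff n (d⁄dX R (PowerSeries.mk fun n => g n / n.factorial)) = g (n + 1) / n.factorial := by
  rw [coeff_derivative, coeff_mk, Nat.factorial_succ]
  push_cast
  field_simp

lemma one_add_X_mul_derivative_mk_div_factorial (g : ℕ → R) :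
    (1 + X) * d⁄dX R (PowerSeries.mk fun n => g n / n.factorial) =
      PowerSeries.mk fun n => (g (n + 1) + n * g n) / n.factorial := by
  ext (_ | n) <;> rw [add_mul, one_mul, map_add, coeff_mk]
  · rw [coeff_zero_X_mul, coeff_derivative_mk_div_factorial]
    simp
  · rw [coeff_succ_X_mul, coeff_derivative_mk_div_factorial,
      coeff_derivative_mk_div_factorial, Nat.factorial_succ]
    push_cast
    field_simp

end ExponentialGeneratingFunction

theorem stmt11_general (α a : ℂ) (k : ℤ) :
    (1 + PowerSeries.X) *
        (PowerSeries.mk fun n => polyCauchy2 k α a n / (n.factorial : ℂ)).derivativeFun =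
      PowerSeries.mk fun n =>
        ((-1 : ℂ) ^ (n + 1) * ∑ j ∈ Finset.range (n + 1),
          (stirling1 n j : ℂ) * (α * (j + 1) + a) ^ (-k)) /
          (n.factorial : ℂ) := by
  refine (one_add_X_mul_derivative_mk_div_factorial (polyCauchy2 k α a)).trans ?_
  simp only [polyCauchy2_succ_add_mul]

theorem stmt11 (α a : ℂ) (hα : α ≠ 0) (ha : ∀ m : ℕ, α * m + a ≠ 0) (k : ℤ) :
    (1 + PowerSeries.X) *
        (PowerSeries.mk fun n => polyCauchy2 k α a n / (n.factorial : ℂ)).derivativeFun =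
      PowerSeries.mk fun n =>
        ((-1 : ℂ) ^ (n + 1) * ∑ j ∈ Finset.range (n + 1),
          (stirling1 n j : ℂ) * (α * (j + 1) + a) ^ (-k)) /
          (n.factorial : ℂ) :=
  stmt11_general α a k
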